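/- arXiv:2305.17989 — 6 statements merged into one kernel-verified Lean document; each statement's English description precedes it below -/
import Mathlib

section
/- Let Π be a finite set partitioned into sink members V and non-sink members Π \ V, with F ⊆ Π faulty, |F| ≤ f, and |V \ F| ≥ 2f + 1. Suppose every slice of a sink member is a subset of V of size ⌈(|V| + f + 1)/2⌉, and every slice of a non-sink member is a subset of V of size f + 1. Then every quorum Q (a set where every member has a slice contained in Q) that contains at least one process with a slice has |Q ∩ V| ≥ ⌈(|V| + f + 1)/2⌉. -/
/-!
A nonempty quorum always contains a sink member: either one of its members is a sink member,
or a non-sink member's slice, a nonempty subset of `V` contained in the quorum, supplies one.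
The slice of that sink member lies in `Q ∩ V` and has the required size.
-/

/-- A set `Q` is a quorum if every member has some slice contained in `Q`. -/
def IsQuorum {α : Type*} (slices : α → Finset (Finset α)) (Q : Finset α) : Prop :=
  ∀ i ∈ Q, ∃ S ∈ slices i, S ⊆ Q

namespace IsQuorum

variable {α : Type*} [DecidableEq α] {slices : α → Finset (Finset α)} {Q V : Finset α} {i : α}

theorem exists_slice_subset_inter (hQ : IsQuorum slices Q) (hi : i ∈ Q)
    (hV : ∀ S ∈ slices i, S ⊆ V) : ∃ S ∈ slices i, S ⊆ Q ∩ V := by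
  obtain ⟨S, hS, hSQ⟩ := hQ i hi
  exact ⟨S, hS, Finset.subset_inter hSQ (hV S hS)⟩

theorem le_card_inter (hQ : IsQuorum slices Q) (hi : i ∈ Q) {k : ℕ}
    (hslices : ∀ S ∈ slices i, S ⊆ V ∧ S.card = k) : k ≤ (Q ∩ V).card := by
  obtain ⟨S, hS, hSQV⟩ := hQ.exists_slice_subset_inter hi fun S hS => (hslices S hS).1
  exact (hslices S hS).2 ▸ Finset.card_le_card hSQV

theorem inter_nonempty (hQ : IsQuorum slices Q) (hi : i ∈ Q)
    (hslices : ∀ S ∈ slices i, S ⊆ V ∧ S.Nonempty) : (Q ∩ V).Nonempty := by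
  obtain ⟨S, hS, hSQV⟩ := hQ.exists_slice_subset_inter hi fun S hS => (hslices S hS).1
  exact (hslices S hS).2.mono hSQV

end IsQuorum

theorem stmt_6_general {α : Type*} [DecidableEq α] (f : ℕ) (P V : Finset α)
    (slices : α → Finset (Finset α))
    (hsink : ∀ i ∈ V, ∀ S ∈ slices i, S ⊆ V ∧ S.card = (V.card + f + 1 + 1) / 2)
    (hnonsink : ∀ i ∈ P \ V, ∀ S ∈ slices i, S ⊆ V ∧ S.card = f + 1)
    (Q : Finset α) (hQP : Q ⊆ P) (hQ : IsQuorum slices Q) (hQne : Q.Nonempty) :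
    (Q ∩ V).card ≥ (V.card + f + 1 + 1) / 2 := by
  obtain ⟨i, hi⟩ := hQne
  have hQV : (Q ∩ V).Nonempty := by
    by_cases hiV : i ∈ V
    · exact ⟨i, Finset.mem_inter.2 ⟨hi, hiV⟩⟩
    · refine hQ.inter_nonempty hi fun S hS => ?_
      obtain ⟨hSV, hScard⟩ := hnonsink i (Finset.mem_sdiff.2 ⟨hQP hi, hiV⟩) S hS
      exact ⟨hSV, Finset.card_pos.1 (by omega)⟩
  obtain ⟨j, hj⟩ := hQV
  obtain ⟨hjQ, hjV⟩ := Finset.mem_inter.1 hj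
  exact hQ.le_card_inter hjQ (hsink j hjV)

theorem stmt_6 {α : Type*} [DecidableEq α] (f : ℕ) (P V F : Finset α)
    (slices : α → Finset (Finset α))
    (hVP : V ⊆ P) (hFP : F ⊆ P) (hF : F.card ≤ f)
    (hcorrect : (V \ F).card ≥ 2 * f + 1)
    (hsink : ∀ i ∈ V, ∀ S ∈ slices i, S ⊆ V ∧ S.card = (V.card + f + 1 + 1) / 2)
    (hnonsink : ∀ i ∈ P \ V, ∀ S ∈ slices i, S ⊆ V ∧ S.card = f + 1)
    (Q : Finset α) (hQP : Q ⊆ P) (hQ : IsQuorum slices Q) (hQne : Q.Nonempty) :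
    (Q ∩ V).card ≥ (V.card + f + 1 + 1) / 2 :=
  stmt_6_general f P V slices hsink hnonsink Q hQP hQ hQne
end

section
/- Let Π be a finite set, V ⊆ Π the sink, F ⊆ Π with |F| ≤ f, |V \ F| ≥ 2f + 1. With slices as in Algorithm 2 (sink members: all ⌈(|V|+f+1)/2⌉-subsets of V; non-sink members: all (f+1)-subsets of V), any two quorums Q₁ and Q₂ (each containing at least one member) satisfy |Q₁ ∩ Q₂ ∩ V| > f. -/
/-!
Every slice of a sink member is a `⌈(|V| + f + 1)/2⌉`-subset of `V`, and every slice of a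
non-sink member is a nonempty subset of `V`, so contains a sink member. Hence a nonempty
quorum contains a sink member together with one of its slices, and so meets `V` in at least
`⌈(|V| + f + 1)/2⌉` processes. Two such subsets of `V` overlap in at least `f + 1` processes.
-/

open Finset

theorem Finset.card_add_card_le_card_add_card_inter {α : Type*} [DecidableEq α]
    {s t u : Finset α} (hs : s ⊆ u) (ht : t ⊆ u) : #s + #t ≤ #u + #(s ∩ t) := by
  rw [← card_union_add_card_inter]
  exact Nat.add_le_add_right (card_le_card (union_subset hs ht)) _

namespace IsQuorum

variable {α : Type*} [DecidableEq α] {slices : α → Finset (Finset α)} {Q V : Finset α}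

theorem le_card_inter_of_slices_eq_powersetCard {i : α} {k : ℕ} (hQ : IsQuorum slices Q)
    (hi : i ∈ Q) (hslices : slices i = powersetCard k V) : k ≤ #(Q ∩ V) := by
  obtain ⟨S, hS, hSQ⟩ := hQ i hi
  rw [hslices, mem_powersetCard] at hS
  exact hS.2 ▸ card_le_card (subset_inter hSQ hS.1)

theorem inter_nonempty_of_nonsink_slices {P : Finset α} {k : ℕ}
    (hQ : IsQuorum slices Q) (hQP : Q ⊆ P) (hQne : Q.Nonempty)
    (hnonsink : ∀ i ∈ P \ V, slices i = powersetCard (k + 1) V) : (Q ∩ V).Nonempty := by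
  obtain ⟨i, hi⟩ := hQne
  by_cases hiV : i ∈ V
  · exact ⟨i, mem_inter.2 ⟨hi, hiV⟩⟩
  obtain ⟨S, hS, hSQ⟩ := hQ i hi
  rw [hnonsink i (mem_sdiff.2 ⟨hQP hi, hiV⟩), mem_powersetCard] at hS
  obtain ⟨j, hj⟩ := card_pos.1 (hS.2 ▸ k.succ_pos : 0 < #S)
  exact ⟨j, mem_inter.2 ⟨hSQ hj, hS.1 hj⟩⟩

theorem le_card_inter_of_nonempty {P : Finset α} {k m : ℕ}
    (hQ : IsQuorum slices Q) (hQP : Q ⊆ P) (hQne : Q.Nonempty)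
    (hsink : ∀ i ∈ V, slices i = powersetCard m V)
    (hnonsink : ∀ i ∈ P \ V, slices i = powersetCard (k + 1) V) : m ≤ #(Q ∩ V) := by
  obtain ⟨j, hj⟩ := hQ.inter_nonempty_of_nonsink_slices hQP hQne hnonsink
  rw [mem_inter] at hj
  exact hQ.le_card_inter_of_slices_eq_powersetCard hj.1 (hsink j hj.2)

end IsQuorum

theorem stmt_7_general {α : Type*} [DecidableEq α] (f : ℕ) (P V : Finset α)
    (slices : α → Finset (Finset α))
    (hsink : ∀ i ∈ V, slices i = Finset.powersetCard ((V.card + f + 1 + 1) / 2) V)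
    (hnonsink : ∀ i ∈ P \ V, slices i = Finset.powersetCard (f + 1) V)
    (Q₁ Q₂ : Finset α) (h1P : Q₁ ⊆ P) (h2P : Q₂ ⊆ P)
    (h1 : IsQuorum slices Q₁) (h2 : IsQuorum slices Q₂)
    (h1ne : Q₁.Nonempty) (h2ne : Q₂.Nonempty) :
    (Q₁ ∩ Q₂ ∩ V).card > f := by
  have hQ₁ := h1.le_card_inter_of_nonempty h1P h1ne hsink hnonsink
  have hQ₂ := h2.le_card_inter_of_nonempty h2P h2ne hsink hnonsink
  have hoverlap := card_add_card_le_card_add_card_inter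
    (inter_subset_right : Q₁ ∩ V ⊆ V) (inter_subset_right : Q₂ ∩ V ⊆ V)
  rw [inter_inter_distrib_right]
  omega

theorem stmt_7 {α : Type*} [DecidableEq α] (f : ℕ) (P V F : Finset α)
    (slices : α → Finset (Finset α))
    (hVP : V ⊆ P) (hFP : F ⊆ P) (hF : F.card ≤ f)
    (hcorrect : (V \ F).card ≥ 2 * f + 1)
    (hsink : ∀ i ∈ V, slices i = Finset.powersetCard ((V.card + f + 1 + 1) / 2) V)
    (hnonsink : ∀ i ∈ P \ V, slices i = Finset.powersetCard (f + 1) V)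
    (Q₁ Q₂ : Finset α) (h1P : Q₁ ⊆ P) (h2P : Q₂ ⊆ P)
    (h1 : IsQuorum slices Q₁) (h2 : IsQuorum slices Q₂)
    (h1ne : Q₁.Nonempty) (h2ne : Q₂.Nonempty) :
    (Q₁ ∩ Q₂ ∩ V).card > f :=
  stmt_7_general f P V slices hsink hnonsink Q₁ Q₂ h1P h2P h1 h2 h1ne h2ne
end

section
/- Let V be a finite set with |V| ≥ 2f + 1 + |F| for F ⊆ V, |F| ≤ f, and assign to each element of V as slices all subsets of V of size ⌈(|V|+f+1)/2⌉. Then there exists a quorum Q ⊆ V \ F, i.e., a set of correct sink members such that every member of Q has a slice contained in Q. -/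
theorem isQuorum_of_card_eq {α : Type*} {slices : α → Finset (Finset α)} {V Q : Finset α}
    {k : ℕ} (hslices : ∀ i ∈ Q, slices i = Finset.powersetCard k V) (hQV : Q ⊆ V)
    (hQ : Q.card = k) : IsQuorum slices Q := fun i hi =>
  ⟨Q, by rw [hslices i hi, Finset.mem_powersetCard]; exact ⟨hQV, hQ⟩, subset_rfl⟩

theorem threshold_le_card_sdiff {α : Type*} [DecidableEq α] {f : ℕ} {V F : Finset α}
    (hF : F.card ≤ f) (hn : V.card ≥ 2 * f + 1 + F.card) :
    (V.card + f + 1 + 1) / 2 ≤ (V \ F).card := by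
  have := Finset.le_card_sdiff F V
  omega

theorem stmt_8_general {α : Type*} [DecidableEq α] (f : ℕ) (V F : Finset α)
    (slices : α → Finset (Finset α))
    (hF : F.card ≤ f) (hn : V.card ≥ 2 * f + 1 + F.card)
    (hslices : ∀ i ∈ V, slices i = Finset.powersetCard ((V.card + f + 1 + 1) / 2) V) :
    ∃ Q : Finset α, Q ⊆ V \ F ∧ Q.Nonempty ∧ IsQuorum slices Q := by
  obtain ⟨Q, hQ, hQcard⟩ := Finset.exists_subset_card_eq (threshold_le_card_sdiff hF hn)
  have hQV : Q ⊆ V := hQ.trans Finset.sdiff_subset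
  refine ⟨Q, hQ, ?_, isQuorum_of_card_eq (fun i hi => hslices i (hQV hi)) hQV hQcard⟩
  rw [← Finset.card_pos, hQcard]
  omega

theorem stmt_8 {α : Type*} [DecidableEq α] (f : ℕ) (V F : Finset α)
    (slices : α → Finset (Finset α))
    (hFV : F ⊆ V) (hF : F.card ≤ f) (hn : V.card ≥ 2 * f + 1 + F.card)
    (hslices : ∀ i ∈ V, slices i = Finset.powersetCard ((V.card + f + 1 + 1) / 2) V) :
    ∃ Q : Finset α, Q ⊆ V \ F ∧ Q.Nonempty ∧ IsQuorum slices Q :=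
  stmt_8_general f V F slices hF hn hslices
end

section
/- There exists a finite directed graph G on 7 vertices and an assignment of slices where each process i's slices are all subsets of its out-neighborhood PDᵢ of size |PDᵢ| − 1, such that each vertex has out-degree 3, the construction satisfies: every slice of i is contained in PDᵢ, and for every set B ⊆ PDᵢ with |B| ≤ 1 some slice of i avoids B; yet there exist two disjoint quorums Q₁ and Q₂. -/
open Finset

section Slices

variable {α : Type*}

theorem exists_mem_powersetCard_subset {n : ℕ} {s t : Finset α} (hts : t ⊆ s) (hn : n ≤ #t) :
    ∃ u ∈ powersetCard n s, u ⊆ t := by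
  obtain ⟨u, hut, rfl⟩ := exists_subset_card_eq hn
  exact ⟨u, mem_powersetCard.2 ⟨hut.trans hts, rfl⟩, hut⟩

theorem exists_mem_powersetCard_card_sub_one_disjoint [DecidableEq α] {s B : Finset α}
    (hB : #B ≤ 1) :
    ∃ u ∈ powersetCard (#s - 1) s, Disjoint u B := by
  have hcard : #s - 1 ≤ #(s \ B) := by have := le_card_sdiff B s; omega
  obtain ⟨u, hu, hus⟩ := exists_mem_powersetCard_subset sdiff_subset hcard
  exact ⟨u, hu, disjoint_of_subset_left hus sdiff_disjoint⟩

theorem isQuorum_powersetCard_card_sub_one [DecidableEq α] {PD : α → Finset α} {Q : Finset α}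
    (hQ : ∀ i ∈ Q, #(PD i) - 1 ≤ #(PD i ∩ Q)) :
    IsQuorum (fun i => powersetCard (#(PD i) - 1) (PD i)) Q := fun i hi =>
  let ⟨u, hu, huQ⟩ := exists_mem_powersetCard_subset inter_subset_left (hQ i hi)
  ⟨u, hu, huQ.trans inter_subset_right⟩

end Slices

/-- The predecessor sets of Fig. 2, with process `k + 1` of the paper numbered `k`. -/
def fig2PD : Fin 7 → Finset (Fin 7) :=
  ![{1, 2, 3}, {0, 2, 3}, {0, 1, 3}, {0, 1, 2}, {0, 5, 6}, {3, 4, 6}, {2, 4, 5}]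

theorem stmt_10 :
    ∃ PD : Fin 7 → Finset (Fin 7),
      -- slices of i are all subsets of PDᵢ of size |PDᵢ| − 1
      let slices : Fin 7 → Finset (Finset (Fin 7)) :=
        fun i => Finset.powersetCard ((PD i).card - 1) (PD i)
      (∀ i, (PD i).card = 3) ∧
      (∀ i, ∀ S ∈ slices i, S ⊆ PD i) ∧
      (∀ i, ∀ B ⊆ PD i, B.card ≤ 1 → ∃ S ∈ slices i, Disjoint S B) ∧
      ∃ Q₁ Q₂ : Finset (Fin 7), Q₁.Nonempty ∧ Q₂.Nonempty ∧
        IsQuorum slices Q₁ ∧ IsQuorum slices Q₂ ∧ Disjoint Q₁ Q₂ := by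
  refine ⟨fig2PD, by decide, fun i S hS => (mem_powersetCard.1 hS).1,
    fun i B _ hB => exists_mem_powersetCard_card_sub_one_disjoint hB,
    {4, 5, 6}, {0, 1, 2, 3}, by decide, by decide, ?_, ?_, by decide⟩
  · exact isQuorum_powersetCard_card_sub_one (by decide)
  · exact isQuorum_powersetCard_card_sub_one (by decide)
end

section
/- Suppose for a finite set Π with fault threshold f: (a) any two quorums of correct sink members intersect in more than f elements, (b) any quorum of a correct non-sink member contains a correct sink member, and (c) any quorum Q containing a sink member k also satisfies that Q is a quorum of k. Then any two quorums of correct processes (sink or non-sink) intersect in more than f elements. -/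
/-! Every quorum of a correct process is also a quorum of some correct sink member: for a
sink member this is trivial, and for a non-sink member (b) supplies a correct sink member
inside the quorum, which by (c) owns it. The intersection bound (a) between sink quorums
therefore transfers to all correct processes. -/

theorem exists_correct_sink_of_mem_quorum {α : Type*} {correct sink : α → Prop}
    {𝒬 : α → Set (Finset α)}
    (hb : ∀ i, correct i → ¬ sink i → ∀ Q ∈ 𝒬 i, ∃ k ∈ Q, correct k ∧ sink k)
    (hc : ∀ (k i : α), sink k → ∀ Q ∈ 𝒬 i, k ∈ Q → Q ∈ 𝒬 k)
    {i : α} (hi : correct i) {Q : Finset α} (hQ : Q ∈ 𝒬 i) :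
    ∃ k, correct k ∧ sink k ∧ Q ∈ 𝒬 k := by
  by_cases hs : sink i
  · exact ⟨i, hi, hs, hQ⟩
  · obtain ⟨k, hkQ, hk, hks⟩ := hb i hi hs Q hQ
    exact ⟨k, hk, hks, hc k i hks Q hQ hkQ⟩

theorem stmt_17 {α : Type*} [DecidableEq α] (f : ℕ)
    (correct sink : α → Prop) (𝒬 : α → Set (Finset α))
    (ha : ∀ i j, correct i → sink i → correct j → sink j →
      ∀ Q ∈ 𝒬 i, ∀ Q' ∈ 𝒬 j, (Q ∩ Q').card > f)
    (hb : ∀ i, correct i → ¬ sink i → ∀ Q ∈ 𝒬 i, ∃ k ∈ Q, correct k ∧ sink k)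
    (hc : ∀ (k i : α), sink k → ∀ Q ∈ 𝒬 i, k ∈ Q → Q ∈ 𝒬 k) :
    ∀ i j, correct i → correct j →
      ∀ Q ∈ 𝒬 i, ∀ Q' ∈ 𝒬 j, (Q ∩ Q').card > f := by
  intro i j hi hj Q hQ Q' hQ'
  obtain ⟨k, hk, hks, hQk⟩ := exists_correct_sink_of_mem_quorum hb hc hi hQ
  obtain ⟨k', hk', hks', hQk'⟩ := exists_correct_sink_of_mem_quorum hb hc hj hQ'
  exact ha k k' hk hks hk' hks' Q hQk Q' hQk'
end

section
/- Let V be a finite set, F ⊆ V with |F| ≤ f, and |V| ≥ 2f + 1 + |F|. For any correct process i with a slice S ⊆ V \ F of size f + 1, and any quorum Q' ⊆ V \ F of the sink members where each member of Q' has a ⌈(|V|+f+1)/2⌉-subset slice inside Q', the set Q'' = Q' ∪ {i} is a quorum for i provided S ⊆ Q'. -/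
theorem stmt_19 {α : Type*} [DecidableEq α] (f : ℕ) (V F : Finset α)
    (slices : α → Finset (Finset α))
    (hFV : F ⊆ V) (hF : F.card ≤ f) (hn : V.card ≥ 2 * f + 1 + F.card)
    (i : α) (S : Finset α) (hS : S ∈ slices i)
    (hSVF : S ⊆ V \ F) (hScard : S.card = f + 1)
    (Q' : Finset α) (hQ'VF : Q' ⊆ V \ F)
    (hQ' : ∀ k ∈ Q', ∃ T ∈ slices k,
      T ⊆ Q' ∧ T.card = (V.card + f + 1 + 1) / 2)
    (hSQ' : S ⊆ Q') :
    i ∈ insert i Q' ∧ IsQuorum slices (insert i Q') := by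
  refine ⟨Finset.mem_insert_self _ _, ?_⟩
  intro k hk
  rcases Finset.mem_insert.mp hk with rfl | hkQ
  · exact ⟨S, hS, hSQ'.trans (Finset.subset_insert _ _)⟩
  · obtain ⟨T, hT, hTQ, _⟩ := hQ' k hkQ
    exact ⟨T, hT, hTQ.trans (Finset.subset_insert _ _)⟩
end
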